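/- Let ψ ∈ (ℂ^d)^{⊗n} be a unit vector, k ∈ {0,…,d−1}², and let B = {|i_k⟩}_{i=0}^{d−1} be an orthonormal basis of ℂ^d with S_{d,k}|i_k⟩ = ω_d^i |i_k⟩. Suppose m_1,…,m_n are integers, each coprime to d, with (S_{d,k}^{m_1}⊗⋯⊗S_{d,k}^{m_n}) ψ = ψ, and suppose that for a given subsystem l the reduced density operator tr_{l̄}(|ψ⟩⟨ψ|) equals (1/d)·1. Then, when the basis B is measured on every subsystem, the mutual information between the outcome at subsystem l and the outcomes at the remaining subsystems satisfies I(B^(l):B^(l̄)| |ψ⟩⟨ψ|) = log₂ d. -/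

import Mathlib

open scoped BigOperators ComplexOrder

namespace Paper

noncomputable section

/-- Base-2 Shannon entropy of a finitely indexed probability vector. -/
def shannon {α : Type*} [Fintype α] (p : α → ℝ) : ℝ :=
  ∑ a, -(p a * Real.logb 2 (p a))

/-- Joint outcome type for `n` subsystems of local dimension `d`. -/
abbrev Idx (n d : ℕ) := Fin n → Fin d

/-- The projector `|ψ⟩⟨ψ|`. -/
def proj {α : Type*} (ψ : α → ℂ) : Matrix α α ℂ :=
  Matrix.of fun x y => ψ x * (starRingEnd ℂ) (ψ y)

/-- A density operator: positive semidefinite with trace one. -/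
def IsDensityOp {α : Type*} [Fintype α] [DecidableEq α] (ρ : Matrix α α ℂ) : Prop :=
  ρ.PosSemidef ∧ ρ.trace = 1

/-- `B` is an orthonormal basis of `ℂ^d` (`B i` is the `i`-th basis vector). -/
def IsONB {d : ℕ} (B : Fin d → Fin d → ℂ) : Prop :=
  ∀ i j, (∑ x, (starRingEnd ℂ) (B i x) * B j x) = if i = j then 1 else 0

/-- Two bases of `ℂ^d` are mutually unbiased. -/
def MutUnbiased {d : ℕ} (B B' : Fin d → Fin d → ℂ) : Prop :=
  ∀ i j, ‖∑ x, (starRingEnd ℂ) (B i x) * B' j x‖ ^ 2 = 1 / d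

/-- Joint outcome distribution of measuring the orthonormal basis `B l` on each factor `l`. -/
def jointProb {n d : ℕ} (ρ : Matrix (Idx n d) (Idx n d) ℂ)
    (B : Fin n → Fin d → Fin d → ℂ) (i : Idx n d) : ℝ :=
  (∑ x : Idx n d, ∑ y : Idx n d,
    (∏ l, (starRingEnd ℂ) (B l (i l) (x l))) * ρ x y * (∏ l, B l (i l) (y l))).re

/-- Marginal distribution of subsystem `l`. -/
def margAt {n d : ℕ} (p : Idx n d → ℝ) (l : Fin n) (i : Fin d) : ℝ :=
  ∑ x : Idx n d, if x l = i then p x else 0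

/-- Insert outcome `i` at position `l` into a tuple of outcomes of the other subsystems. -/
def insertAt {n d : ℕ} (l : Fin n) (i : Fin d) (g : {m : Fin n // m ≠ l} → Fin d) : Idx n d :=
  fun m => if h : m = l then i else g ⟨m, h⟩

/-- Marginal distribution of all subsystems except `l`. -/
def margRest {n d : ℕ} (p : Idx n d → ℝ) (l : Fin n)
    (g : {m : Fin n // m ≠ l} → Fin d) : ℝ :=
  ∑ i : Fin d, p (insertAt l i g)

/-- Mutual information `I(B⁽ˡ⁾ : B⁽ˡ̄⁾)` between the outcome at subsystem `l` and the
outcomes at the remaining subsystems, for the joint outcome distribution `p`. -/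
def mutualInfo {n d : ℕ} (p : Idx n d → ℝ) (l : Fin n) : ℝ :=
  shannon (margAt p l) + shannon (margRest p l) - shannon p

/-- The correlation function `C_N(ρ, {B_k^{(l)}})`. -/
def CNval {n d : ℕ} (N : ℕ) (ρ : Matrix (Idx n d) (Idx n d) ℂ)
    (B : Fin N → Fin n → Fin d → Fin d → ℂ) : ℝ :=
  (1 / (n * N)) * ∑ k, ∑ l, mutualInfo (jointProb ρ (B k)) l

/-- `B k l` is, for each subsystem `l`, a family of `N` pairwise mutually unbiased
orthonormal bases (indexed by `k`). -/
def ValidMUBs {n d : ℕ} (N : ℕ) (B : Fin N → Fin n → Fin d → Fin d → ℂ) : Prop :=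
  (∀ k l, IsONB (B k l)) ∧ ∀ l k k', k ≠ k' → MutUnbiased (B k l) (B k' l)

/-- The set of values `C_N(ρ, ·)` over all admissible choices of MUBs;
`𝒞_N(ρ)` is the supremum of this set. -/
def CNvalues {n d : ℕ} (N : ℕ) (ρ : Matrix (Idx n d) (Idx n d) ℂ) : Set ℝ :=
  {x | ∃ B : Fin N → Fin n → Fin d → Fin d → ℂ, ValidMUBs N B ∧ x = CNval N ρ B}

/-- Single-subsystem reduced state `tr_{l̄} ρ`. -/
def reducedAt {n d : ℕ} (ρ : Matrix (Idx n d) (Idx n d) ℂ) (l : Fin n) :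
    Matrix (Fin d) (Fin d) ℂ :=
  Matrix.of fun i j =>
    ∑ g : {m : Fin n // m ≠ l} → Fin d, ρ (insertAt l i g) (insertAt l j g)

/-- `ω_d = exp(2πi/d)`. -/
def ω (d : ℕ) : ℂ := Complex.exp (2 * Real.pi * Complex.I / d)

/-- The generalized Pauli operator `X_d`. -/
def Xmat (d : ℕ) : Matrix (Fin d) (Fin d) ℂ :=
  Matrix.of fun i j => if (i : ℕ) = ((j : ℕ) + 1) % d then 1 else 0

/-- The generalized Pauli operator `Z_d`. -/
def Zmat (d : ℕ) : Matrix (Fin d) (Fin d) ℂ :=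
  Matrix.of fun i j => if i = j then ω d ^ (i : ℕ) else 0

/-- The generalized Pauli operator `S_{d,(k₁,k₂)} = X_d^{k₁} Z_d^{k₂}`. -/
def Smat (d : ℕ) (k : Fin d × Fin d) : Matrix (Fin d) (Fin d) ℂ :=
  Xmat d ^ (k.1 : ℕ) * Zmat d ^ (k.2 : ℕ)

/-- Apply a local operator `A l` to each tensor factor of a multipartite vector `ψ`,
i.e. the vector `(⊗_l A l) ψ`. -/
def applyLocal {n d : ℕ} (A : Fin n → Matrix (Fin d) (Fin d) ℂ) (ψ : Idx n d → ℂ) :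
    Idx n d → ℂ :=
  fun x => ∑ y : Idx n d, (∏ l, A l (x l) (y l)) * ψ y

/-- The computational (standard) basis of `ℂ^d`, the eigenbasis of `Z_d`. -/
def stdBasis (d : ℕ) : Fin d → Fin d → ℂ :=
  fun i x => if x = i then 1 else 0

/-- The Fourier basis of `ℂ^d`, the eigenbasis of `X_d`. -/
def fourierBasis (d : ℕ) : Fin d → Fin d → ℂ :=
  fun i x => (((Real.sqrt d)⁻¹ : ℝ) : ℂ) * ω d ^ ((i : ℕ) * (x : ℕ))

/-- The `n`-fold tensor product `⊗_l A l` as a matrix on the joint system. -/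
def tensorN {n d : ℕ} (A : Fin n → Matrix (Fin d) (Fin d) ℂ) :
    Matrix (Idx n d) (Idx n d) ℂ :=
  Matrix.of fun x y => ∏ l, A l (x l) (y l)

/-- Full separability of an `n`-partite density operator. -/
def FullySep {n d : ℕ} (ρ : Matrix (Idx n d) (Idx n d) ℂ) : Prop :=
  ∃ (J : ℕ) (p : Fin J → ℝ) (σ : Fin J → Fin n → Matrix (Fin d) (Fin d) ℂ),
    (∀ j, 0 ≤ p j) ∧ (∑ j, p j) = 1 ∧ (∀ j l, IsDensityOp (σ j l)) ∧
    ρ = ∑ j, p j • tensorN (σ j)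

/-- generalized GHZ state `(1/√d) ∑_i |i⟩^{⊗n}`. -/
def GHZvec (d n : ℕ) : Idx n d → ℂ :=
  fun x => if ∀ l l', x l = x l' then (((Real.sqrt d)⁻¹ : ℝ) : ℂ) else 0


/-! Write `aₓ = ⟨b_{x₁} ⊗ ⋯ ⊗ b_{xₙ}|ψ⟩`, so that `p x = |aₓ|²`. Every operator `S^{m_l}`
is diagonal in `B`, hence the symmetry gives `aₓ = (∏_l ζ_l^{x_l}) aₓ` with `ζ_l = ω^{m_l}` a
primitive `d`-th root of unity. Once the outcomes of the other subsystems are fixed, at most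
one outcome at `l` is therefore possible, so `H(p) = H(p_{l̄})` and the mutual information
collapses to `H(p_l)`. Measuring the rest in an orthonormal basis does not change the
reduced state at `l`, so `p_l` is the diagonal of `𝟙/d` written in the basis `B`: uniform,
with entropy `log₂ d`. -/

open Matrix


variable {n d : ℕ}

@[simp] lemma insertAt_self (l : Fin n) (i : Fin d) (g : {m : Fin n // m ≠ l} → Fin d) :
    insertAt l i g l = i := by simp [insertAt]

@[simp] lemma insertAt_val (l : Fin n) (i : Fin d) (g : {m : Fin n // m ≠ l} → Fin d)
    (m : {m : Fin n // m ≠ l}) : insertAt l i g m = g m := by simp [insertAt, m.2]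

lemma funSplitAt_symm_apply (l : Fin n) (p : Fin d × ({m : Fin n // m ≠ l} → Fin d)) :
    (Equiv.funSplitAt l (Fin d)).symm p = insertAt l p.1 p.2 := by
  ext m
  by_cases h : m = l
  · subst h; simp
  · simp [insertAt, h]

lemma sum_eq_sum_insertAt {M : Type*} [AddCommMonoid M] (l : Fin n) (F : Idx n d → M) :
    ∑ x, F x = ∑ i, ∑ g : {m : Fin n // m ≠ l} → Fin d, F (insertAt l i g) := by
  rw [← (Equiv.funSplitAt l (Fin d)).symm.sum_comp, Fintype.sum_prod_type]
  simp only [funSplitAt_symm_apply]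

lemma tensorN_insertAt (A : Fin n → Matrix (Fin d) (Fin d) ℂ) (l : Fin n) (a b : Fin d)
    (g h : {m : Fin n // m ≠ l} → Fin d) :
    tensorN A (insertAt l a g) (insertAt l b h)
      = A l a b * ∏ m : {m : Fin n // m ≠ l}, A m (g m) (h m) := by
  rw [tensorN, of_apply, Fintype.prod_eq_mul_prod_subtype_ne _ l]
  simp only [insertAt_self, insertAt_val]

lemma tensorN_mul (A C : Fin n → Matrix (Fin d) (Fin d) ℂ) :
    tensorN A * tensorN C = tensorN fun l => A l * C l := by
  ext x z
  simp only [tensorN, mul_apply, of_apply, Fintype.prod_sum,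
    Finset.prod_mul_distrib]

lemma tensorN_diagonal (μ : Fin n → Fin d → ℂ) :
    tensorN (fun l => diagonal (μ l)) = diagonal fun x => ∏ l, μ l (x l) := by
  classical
  ext x y
  simp only [tensorN, of_apply, diagonal_apply]
  split_ifs with h
  · simp [h]
  · obtain ⟨l, hl⟩ := Function.ne_iff.mp h
    exact Finset.prod_eq_zero (Finset.mem_univ l) (if_neg hl)

lemma sum_prod_mul_star_prod {ι : Type*} [Fintype ι] [DecidableEq ι]
    {A : ι → Matrix (Fin d) (Fin d) ℂ} (hA : ∀ m, (A m)ᴴ * A m = 1) (h h' : ι → Fin d) :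
    ∑ g : ι → Fin d, (∏ m, A m (g m) (h m)) * star (∏ m, A m (g m) (h' m))
      = if h = h' then 1 else 0 := by
  have hcol : ∀ m, ∑ c, A m c (h m) * star (A m c (h' m)) = if h m = h' m then 1 else 0 := by
    intro m
    have := congrFun (congrFun (hA m) (h' m)) (h m)
    simp only [mul_apply, conjTranspose_apply, one_apply] at this
    simp_rw [mul_comm (A m _ (h m))]
    rw [this]
    exact if_congr eq_comm rfl rfl
  simp_rw [star_prod, ← Finset.prod_mul_distrib]
  rw [← Fintype.prod_sum (fun m c => A m c (h m) * star (A m c (h' m)))]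
  simp_rw [hcol]
  rw [Fintype.prod_boole]
  exact if_congr funext_iff.symm rfl rfl

lemma reducedAt_tensorN_mul_mul_conjTranspose {A : Fin n → Matrix (Fin d) (Fin d) ℂ} (l : Fin n)
    (hA : ∀ m ≠ l, (A m)ᴴ * A m = 1) (ρ : Matrix (Idx n d) (Idx n d) ℂ) :
    reducedAt (tensorN A * ρ * (tensorN A)ᴴ) l = A l * reducedAt ρ l * (A l)ᴴ := by
  have hrest := sum_prod_mul_star_prod (A := fun m : {m : Fin n // m ≠ l} => A m)
    fun m => hA m m.2
  ext a b
  calc reducedAt (tensorN A * ρ * (tensorN A)ᴴ) l a b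
      = ∑ g : {m : Fin n // m ≠ l} → Fin d, ∑ x, ∑ y,
          tensorN A (insertAt l a g) x * ρ x y * star (tensorN A (insertAt l b g) y) := by
        simp only [reducedAt, of_apply, mul_apply, conjTranspose_apply, Finset.sum_mul]
        exact Finset.sum_congr rfl fun g _ => Finset.sum_comm
    _ = ∑ a', ∑ h : {m : Fin n // m ≠ l} → Fin d, ∑ b', ∑ h',
          A l a a' * ρ (insertAt l a' h) (insertAt l b' h') * star (A l b b') *
            ∑ g : {m : Fin n // m ≠ l} → Fin d,
              (∏ m : {m : Fin n // m ≠ l}, A m (g m) (h m)) *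
                star (∏ m : {m : Fin n // m ≠ l}, A m (g m) (h' m)) := by
        simp only [sum_eq_sum_insertAt l, tensorN_insertAt, Finset.mul_sum]
        rw [Finset.sum_comm]; refine Finset.sum_congr rfl fun a' _ => ?_
        rw [Finset.sum_comm]; refine Finset.sum_congr rfl fun h _ => ?_
        rw [Finset.sum_comm]; refine Finset.sum_congr rfl fun b' _ => ?_
        rw [Finset.sum_comm]; refine Finset.sum_congr rfl fun h' _ => ?_
        refine Finset.sum_congr rfl fun g _ => ?_
        rw [star_mul]
        ring
    _ = ∑ a', ∑ b',
          A l a a' * (∑ h, ρ (insertAt l a' h) (insertAt l b' h)) * star (A l b b') := by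
        simp only [hrest, mul_ite, mul_one, mul_zero, Finset.sum_ite_eq, Finset.mem_univ, if_true,
          Finset.mul_sum, Finset.sum_mul]
        exact Finset.sum_congr rfl fun a' _ => Finset.sum_comm
    _ = (A l * reducedAt ρ l * (A l)ᴴ) a b := by
        simp only [reducedAt, of_apply, mul_apply, conjTranspose_apply, Finset.sum_mul,
          Finset.mul_sum]
        exact Finset.sum_comm

lemma zpow_mulVec_of_mulVec_eq_smul {ι K : Type*} [Fintype ι] [DecidableEq ι] [Field K]
    {A : Matrix ι ι K} (hA : IsUnit A.det) {v : ι → K} {μ : K} (h : A *ᵥ v = μ • v) (t : ℤ) :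
    A ^ t *ᵥ v = μ ^ t • v := by
  rcases eq_or_ne μ 0 with rfl | hμ
  · have hv : v = 0 := eq_zero_of_mulVec_eq_zero hA.ne_zero (by rw [h, zero_smul])
    simp [hv]
  have hinv : A⁻¹ *ᵥ v = μ⁻¹ • v := by
    rw [eq_inv_smul_iff₀ hμ, ← mulVec_smul, ← h, mulVec_mulVec, nonsing_inv_mul A hA,
      one_mulVec]
  induction t using Int.induction_on with
  | zero => simp
  | succ t ih =>
    rw [zpow_add_one hA, ← mulVec_mulVec, h, mulVec_smul, ih, smul_smul, zpow_add_one₀ hμ,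
      mul_comm]
  | pred t ih =>
    rw [zpow_sub_one hA, ← mulVec_mulVec, hinv, mulVec_smul, ih, smul_smul, zpow_sub_one₀ hμ,
      mul_comm]

-- Row `i` is the bra `⟨B i|`; `IsONB B` says exactly that this matrix is unitary.
def braMatrix (B : Fin d → Fin d → ℂ) : Matrix (Fin d) (Fin d) ℂ :=
  of fun i x => star (B i x)

namespace IsONB

variable {B : Fin d → Fin d → ℂ}

lemma braMatrix_mul_conjTranspose (hB : IsONB B) : braMatrix B * (braMatrix B)ᴴ = 1 := by
  ext i j
  simpa [braMatrix, mul_apply, one_apply] using hB i j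

lemma conjTranspose_mul_braMatrix (hB : IsONB B) : (braMatrix B)ᴴ * braMatrix B = 1 :=
  mul_eq_one_comm.mp hB.braMatrix_mul_conjTranspose

lemma braMatrix_mul_of_mulVec_eq_smul (hB : IsONB B) {A : Matrix (Fin d) (Fin d) ℂ}
    {μ : Fin d → ℂ} (h : ∀ j, A *ᵥ B j = μ j • B j) :
    braMatrix B * A = diagonal μ * braMatrix B := by
  have hcol : A * (braMatrix B)ᴴ = (braMatrix B)ᴴ * diagonal μ := by
    ext x j
    rw [mul_diagonal]
    simpa [braMatrix, mul_apply, mulVec, dotProduct, mul_comm] using congrFun (h j) x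
  calc braMatrix B * A = braMatrix B * (A * (braMatrix B)ᴴ) * braMatrix B := by
        rw [mul_assoc, mul_assoc, hB.conjTranspose_mul_braMatrix, mul_one]
    _ = diagonal μ * braMatrix B := by
        rw [hcol, ← mul_assoc, hB.braMatrix_mul_conjTranspose, one_mul]

lemma isUnit_det_of_mulVec_eq_smul (hB : IsONB B) {A : Matrix (Fin d) (Fin d) ℂ}
    {μ : Fin d → ℂ} (h : ∀ j, A *ᵥ B j = μ j • B j) (hμ : ∀ j, μ j ≠ 0) : IsUnit A.det := by
  have hA : A = (braMatrix B)ᴴ * diagonal μ * braMatrix B := by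
    rw [mul_assoc, ← hB.braMatrix_mul_of_mulVec_eq_smul h, ← mul_assoc,
      hB.conjTranspose_mul_braMatrix, one_mul]
  rw [hA, det_mul, det_mul, det_diagonal]
  exact ((isUnit_det_of_left_inverse hB.braMatrix_mul_conjTranspose).mul
    (IsUnit.mk0 _ (Finset.prod_ne_zero_iff.mpr fun j _ => hμ j))).mul
    (isUnit_det_of_left_inverse hB.conjTranspose_mul_braMatrix)

end IsONB

lemma braMatrix_mul_zpow_of_mulVec_eq_pow_smul {B : Fin d → Fin d → ℂ} (hB : IsONB B)
    {A : Matrix (Fin d) (Fin d) ℂ} {ζ : ℂ} (hζ : ζ ≠ 0)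
    (h : ∀ j : Fin d, A *ᵥ B j = ζ ^ (j : ℕ) • B j) (t : ℤ) :
    braMatrix B * A ^ t = diagonal (fun j : Fin d => (ζ ^ t) ^ (j : ℕ)) * braMatrix B := by
  have hA := hB.isUnit_det_of_mulVec_eq_smul h fun j => pow_ne_zero _ hζ
  refine hB.braMatrix_mul_of_mulVec_eq_smul fun j => ?_
  rw [zpow_mulVec_of_mulVec_eq_smul hA (h j), ← zpow_natCast, ← _root_.zpow_mul, mul_comm,
    _root_.zpow_mul, zpow_natCast]

lemma tensorN_mulVec_applyLocal {V A : Fin n → Matrix (Fin d) (Fin d) ℂ}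
    {μ : Fin n → Fin d → ℂ} (h : ∀ l, V l * A l = diagonal (μ l) * V l) (ψ : Idx n d → ℂ) :
    tensorN V *ᵥ applyLocal A ψ = fun x => (∏ l, μ l (x l)) * (tensorN V *ᵥ ψ) x := by
  have hA : applyLocal A ψ = tensorN A *ᵥ ψ := rfl
  ext x
  simp only [hA, mulVec_mulVec, tensorN_mul, h]
  rw [← tensorN_mul, ← mulVec_mulVec, tensorN_diagonal, mulVec_diagonal]

lemma jointProb_eq_re_diag (ρ : Matrix (Idx n d) (Idx n d) ℂ) (B : Fin n → Fin d → Fin d → ℂ)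
    (i : Idx n d) :
    jointProb ρ B i = ((tensorN (fun l => braMatrix (B l)) * ρ *
      (tensorN fun l => braMatrix (B l))ᴴ) i i).re := by
  simp only [jointProb, mul_apply, conjTranspose_apply, tensorN, braMatrix, of_apply, star_prod,
    star_star, Finset.sum_mul]
  rw [Finset.sum_comm]
  rfl

lemma jointProb_proj (ψ : Idx n d → ℂ) (B : Fin n → Fin d → Fin d → ℂ) (i : Idx n d) :
    jointProb (proj ψ) B i = Complex.normSq ((tensorN (fun l => braMatrix (B l)) *ᵥ ψ) i) := by
  have hproj : proj ψ = vecMulVec ψ (star ψ) := rfl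
  rw [jointProb_eq_re_diag, hproj, mul_vecMulVec, vecMulVec_mul, ← star_mulVec, vecMulVec_apply,
    Pi.star_apply, Complex.star_def, Complex.mul_conj, Complex.ofReal_re]

lemma margAt_eq_sum_insertAt (p : Idx n d → ℝ) (l : Fin n) (i : Fin d) :
    margAt p l i = ∑ g : {m : Fin n // m ≠ l} → Fin d, p (insertAt l i g) := by
  simp [margAt, sum_eq_sum_insertAt l]

lemma margAt_jointProb {B : Fin n → Fin d → Fin d → ℂ} (l : Fin n) (hB : ∀ m ≠ l, IsONB (B m))
    (ρ : Matrix (Idx n d) (Idx n d) ℂ) (i : Fin d) :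
    margAt (jointProb ρ B) l i
      = ((braMatrix (B l) * reducedAt ρ l * (braMatrix (B l))ᴴ) i i).re := by
  rw [← reducedAt_tensorN_mul_mul_conjTranspose l
    fun m hm => (hB m hm).conjTranspose_mul_braMatrix, margAt_eq_sum_insertAt]
  simp only [jointProb_eq_re_diag, reducedAt, of_apply, Complex.re_sum]

lemma eq_of_ne_zero_insertAt {ζ : Fin n → ℂ} {a : Idx n d → ℂ}
    (ha : ∀ x, a x = (∏ m, ζ m ^ (x m : ℕ)) * a x) {l : Fin n} (hζ : IsPrimitiveRoot (ζ l) d)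
    {g : {m : Fin n // m ≠ l} → Fin d} {i i' : Fin d}
    (hi : a (insertAt l i g) ≠ 0) (hi' : a (insertAt l i' g) ≠ 0) : i = i' := by
  have hchar : ∀ j, a (insertAt l j g) ≠ 0 →
      ζ l ^ (j : ℕ) * ∏ m : {m : Fin n // m ≠ l}, ζ m ^ (g m : ℕ) = 1 := by
    intro j hj
    have := ha (insertAt l j g)
    rw [Fintype.prod_eq_mul_prod_subtype_ne _ l] at this
    simp only [insertAt_self, insertAt_val] at this
    exact (mul_eq_right₀ hj).mp this.symm
  have h1 := hchar i hi
  rw [← hchar i' hi'] at h1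
  exact Fin.ext (hζ.pow_inj i.isLt i'.isLt
    (mul_right_cancel₀ (right_ne_zero_of_mul_eq_one (hchar i hi)) h1))

lemma shannon_eq_shannon_margRest {p : Idx n d → ℝ} (l : Fin n)
    (huniq : ∀ g (i i' : Fin d), p (insertAt l i g) ≠ 0 → p (insertAt l i' g) ≠ 0 → i = i') :
    shannon p = shannon (margRest p l) := by
  rw [shannon, shannon, sum_eq_sum_insertAt l, Finset.sum_comm]
  refine Finset.sum_congr rfl fun g _ => ?_
  by_cases hzero : ∀ i, p (insertAt l i g) = 0
  · simp [margRest, hzero]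
  simp only [not_forall] at hzero
  obtain ⟨i₀, hi₀⟩ := hzero
  have hz : ∀ i ≠ i₀, p (insertAt l i g) = 0 := fun i hi =>
    by_contra fun hne => hi (huniq g i i₀ hne hi₀)
  rw [margRest, Finset.sum_eq_single i₀ (fun i _ hi => by rw [hz i hi, zero_mul, neg_zero])
    (by simp), Finset.sum_eq_single i₀ (fun i _ hi => hz i hi) (by simp)]

lemma mutualInfo_eq_shannon_margAt {p : Idx n d → ℝ} (l : Fin n)
    (huniq : ∀ g (i i' : Fin d), p (insertAt l i g) ≠ 0 → p (insertAt l i' g) ≠ 0 → i = i') :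
    mutualInfo p l = shannon (margAt p l) := by
  rw [mutualInfo, shannon_eq_shannon_margRest l huniq, add_sub_cancel_right]

lemma shannon_of_forall_eq_inv_card {α : Type*} [Fintype α] {q : α → ℝ}
    (hq : ∀ a, q a = (Fintype.card α : ℝ)⁻¹) : shannon q = Real.logb 2 (Fintype.card α) := by
  rcases isEmpty_or_nonempty α with _ | _
  · simp [shannon]
  have hc : (Fintype.card α : ℝ) ≠ 0 := by positivity
  simp only [shannon, hq, Real.logb_inv, Finset.sum_const, Finset.card_univ, nsmul_eq_mul]
  field_simp

theorem pauli_symmetry_gives_maximal_mutual_info_general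
    (d n : ℕ) (ψ : Idx n d → ℂ)
    (k : Fin d × Fin d) (B : Fin d → Fin d → ℂ) (hONB : IsONB B)
    (heig : ∀ i : Fin d, Matrix.mulVec (Smat d k) (B i) = ω d ^ (i : ℕ) • B i)
    (m : Fin n → ℤ) (hcop : ∀ l, Int.gcd (m l) d = 1)
    (hsym : applyLocal (fun l => Smat d k ^ (m l)) ψ = ψ)
    (l : Fin n) (hred : reducedAt (proj ψ) l = ((d : ℂ))⁻¹ • 1) :
    mutualInfo (jointProb (proj ψ) (fun _ => B)) l = Real.logb 2 d := by
  have hmarg : ∀ i, margAt (jointProb (proj ψ) (fun _ => B)) l i = (d : ℝ)⁻¹ := fun i => by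
    rw [margAt_jointProb l (fun _ _ => hONB), hred, Matrix.mul_smul, Matrix.mul_one,
      Matrix.smul_mul, hONB.braMatrix_mul_conjTranspose]
    simp
  have hamp : ∀ x, (tensorN (fun _ => braMatrix B) *ᵥ ψ) x
      = (∏ l, (ω d ^ m l) ^ (x l : ℕ)) * (tensorN (fun _ => braMatrix B) *ᵥ ψ) x := fun x => by
    conv_lhs => rw [← hsym]
    rw [tensorN_mulVec_applyLocal fun l =>
      braMatrix_mul_zpow_of_mulVec_eq_pow_smul (ζ := ω d) hONB (Complex.exp_ne_zero _) heig (m l)]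
  have huniq : ∀ g (i i' : Fin d), jointProb (proj ψ) (fun _ => B) (insertAt l i g) ≠ 0 →
      jointProb (proj ψ) (fun _ => B) (insertAt l i' g) ≠ 0 → i = i' := by
    intro g i i' hi hi'
    have hω : IsPrimitiveRoot (ω d) d := Complex.isPrimitiveRoot_exp d i.pos.ne'
    rw [jointProb_proj, ne_eq, Complex.normSq_eq_zero] at hi hi'
    exact eq_of_ne_zero_insertAt hamp (hω.zpow_of_gcd_eq_one _ (hcop l)) hi hi'
  rw [mutualInfo_eq_shannon_margAt l huniq,
    shannon_of_forall_eq_inv_card (by simpa using hmarg), Fintype.card_fin]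

/-- For a state with a suitable generalized-Pauli tensor-power symmetry and completely
mixed reduced state at subsystem `l`, measuring the corresponding eigenbasis on every
subsystem yields the maximal mutual information `log₂ d` between `l` and the rest. -/
theorem pauli_symmetry_gives_maximal_mutual_info
    (d n : ℕ) (ψ : Idx n d → ℂ) (hunit : ∑ x, Complex.normSq (ψ x) = 1)
    (k : Fin d × Fin d) (B : Fin d → Fin d → ℂ) (hONB : IsONB B)
    (heig : ∀ i : Fin d, Matrix.mulVec (Smat d k) (B i) = ω d ^ (i : ℕ) • B i)
    (m : Fin n → ℤ) (hcop : ∀ l, Int.gcd (m l) d = 1)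
    (hsym : applyLocal (fun l => Smat d k ^ (m l)) ψ = ψ)
    (l : Fin n) (hred : reducedAt (proj ψ) l = ((d : ℂ))⁻¹ • 1) :
    mutualInfo (jointProb (proj ψ) (fun _ => B)) l = Real.logb 2 d :=
  pauli_symmetry_gives_maximal_mutual_info_general d n ψ k B hONB heig m hcop hsym l hred

end
end Paper
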